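/- Measuring implies the failure of club guessing at ω₁: if every sequence (C_δ : δ ∈ Lim(ω₁)) of clubs C_δ ⊆ δ is measured by some club C ⊆ ω₁, then there is no club-guessing sequence on ω₁, i.e., there is no sequence (C_δ : δ ∈ Lim(ω₁)) with each C_δ a club of δ such that for every club E ⊆ ω₁ there is δ ∈ Lim(ω₁) with C_δ ⊆ E. -/

import Mathlib

open Cardinal Set

noncomputable section

/-- `α` is a limit point of the set `A` of ordinals. -/
def IsLimitPointOf (A : Set Ordinal) (α : Ordinal) : Prop :=
  α ≠ 0 ∧ ∀ β < α, ∃ γ ∈ A, β < γ ∧ γ < α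

/-- `C` is a club (closed unbounded set) in `δ`. -/
def IsClubIn (C : Set Ordinal) (δ : Ordinal) : Prop :=
  (∀ α ∈ C, α < δ) ∧ (∀ β < δ, ∃ γ ∈ C, β < γ) ∧
    ∀ α < δ, IsLimitPointOf C α → α ∈ C

/-- The Mostowski collapsing function of a set `s` of ordinals:
`collapseMap s β` is the order type of `s ∩ β`. -/
noncomputable def collapseMap (s : Set Ordinal) : Ordinal → Ordinal :=
  WellFounded.fix wellFounded_lt (fun β ih =>
    sSup (Set.range fun γ : {γ : Ordinal // γ ∈ s ∧ γ < β} => ih γ.1 γ.2.2 + 1))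

/-- The order type of a set of ordinals. -/
noncomputable def otypeSet (s : Set Ordinal) : Ordinal :=
  sSup (Set.range fun γ : s => collapseMap s γ.1 + 1)

/-!
If `C` guesses clubs and the club `E` measures `C`, let `δ` be a point where `C δ` is contained
in the club of limit points of `E` that lie in `E` (a club because `cof ω₁ > ω`). Then `δ ∈ E`,
and at `δ` neither alternative of measuring can hold: `C δ ⊆ E` is unbounded in `δ`, so no tail
of `E` avoids it, while the least element of `E` above `α` is not a limit point of `E`, hence is
not in `C δ`. The hypothesis and the conclusion of the theorem live in different universes;
`Ordinal.lift` identifies the countable ordinals of any two universes, which moves the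
club-guessing sequence to the universe of the hypothesis.
-/

open scoped Ordinal

def Measures (E : Set Ordinal) (C : Ordinal → Set Ordinal) : Prop :=
  ∀ δ ∈ E, ∃ α < δ, (∀ γ ∈ E, γ < δ → α ≤ γ → γ ∈ C δ) ∨ (∀ γ ∈ E, α ≤ γ → γ ∉ C δ)

def IsClubGuessing (κ : Ordinal) (C : Ordinal → Set Ordinal) : Prop :=
  (∀ δ < κ, Order.IsSuccLimit δ → IsClubIn (C δ) δ) ∧
    ∀ E, IsClubIn E κ → ∃ δ < κ, Order.IsSuccLimit δ ∧ C δ ⊆ E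

theorem IsLimitPointOf.mono {A B : Set Ordinal} {α : Ordinal} (hAB : A ⊆ B)
    (h : IsLimitPointOf A α) : IsLimitPointOf B α :=
  ⟨h.1, fun β hβ => (h.2 β hβ).imp fun _ ⟨hγ, hβγ⟩ => ⟨hAB hγ, hβγ⟩⟩

theorem IsClubIn.isLimitPointOf {D : Set Ordinal} {δ : Ordinal} (hD : IsClubIn D δ)
    (hδ : δ ≠ 0) : IsLimitPointOf D δ :=
  ⟨hδ, fun β hβ =>
    let ⟨γ, hγ, hβγ⟩ := hD.2.1 β hβ
    ⟨γ, hγ, hβγ, hD.1 γ hγ⟩⟩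

theorem exists_mem_Ioo_not_isLimitPointOf {E : Set Ordinal} {α δ : Ordinal}
    (h : (E ∩ Ioo α δ).Nonempty) : ∃ γ ∈ E ∩ Ioo α δ, ¬ IsLimitPointOf E γ := by
  refine ⟨sInf (E ∩ Ioo α δ), csInf_mem h, fun hlim => ?_⟩
  obtain ⟨hγE, hαγ, hγδ⟩ := csInf_mem h
  obtain ⟨γ', hγ'E, hαγ', hγ'γ⟩ := hlim.2 α hαγ
  exact (csInf_le' (s := E ∩ Ioo α δ) ⟨hγ'E, hαγ', hγ'γ.trans hγδ⟩).not_gt hγ'γ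

theorem IsClubIn.exists_isLimitPointOf_gt {E : Set Ordinal} {κ : Ordinal} (hE : IsClubIn E κ)
    (hκ : ℵ₀ < κ.cof) {β : Ordinal} (hβ : β < κ) : ∃ x < κ, β < x ∧ IsLimitPointOf E x := by
  choose! next hnextE hlt_next using hE.2.1
  let f : ℕ → Ordinal := fun n => next^[n + 1] β
  have hf_succ : ∀ n, f (n + 1) = next (f n) := fun n =>
    Function.iterate_succ_apply' next (n + 1) β
  have hfE : ∀ n, f n ∈ E := by
    intro n
    induction n with
    | zero => exact hnextE β hβ
    | succ n ih => exact hf_succ n ▸ hnextE _ (hE.1 _ ih)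
  have hf_lt_sup : ∀ n, f n < ⨆ m, f m := fun n =>
    (hf_succ n ▸ hlt_next _ (hE.1 _ (hfE n))).trans_le (Ordinal.le_iSup f (n + 1))
  have hβ_lt_sup : β < ⨆ n, f n := (hlt_next β hβ).trans (hf_lt_sup 0)
  refine ⟨⨆ n, f n, Ordinal.lift_iSup_lt_of_lt_cof (by simpa using hκ) fun n => hE.1 _ (hfE n),
    hβ_lt_sup, hβ_lt_sup.ne_bot, fun b hb => ?_⟩
  obtain ⟨n, hn⟩ := Ordinal.lt_iSup_iff.mp hb
  exact ⟨f n, hfE n, hn, hf_lt_sup n⟩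

theorem IsClubIn.inter_limitPoints {E : Set Ordinal} {κ : Ordinal} (hE : IsClubIn E κ)
    (hκ : ℵ₀ < κ.cof) : IsClubIn (E ∩ {x | IsLimitPointOf E x}) κ := by
  refine ⟨fun x hx => hE.1 x hx.1, fun β hβ => ?_, fun α hα hlim => ?_⟩
  · obtain ⟨x, hxκ, hβx, hx⟩ := hE.exists_isLimitPointOf_gt hκ hβ
    exact ⟨x, ⟨hE.2.2 x hxκ hx, hx⟩, hβx⟩
  · have hαE : IsLimitPointOf E α := hlim.mono inter_subset_left
    exact ⟨hE.2.2 α hα hαE, hαE⟩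

theorem IsClubIn.not_measured_of_subset_limitPoints {D E : Set Ordinal} {δ α : Ordinal}
    (hD : IsClubIn D δ) (hDE : D ⊆ E ∩ {x | IsLimitPointOf E x}) (hα : α < δ) :
    ¬ ((∀ γ ∈ E, γ < δ → α ≤ γ → γ ∈ D) ∨ (∀ γ ∈ E, α ≤ γ → γ ∉ D)) := by
  obtain ⟨γ, hγD, hαγ⟩ := hD.2.1 α hα
  rintro (htail | hdisjoint)
  · obtain ⟨γ', ⟨hγ'E, hαγ', hγ'δ⟩, hγ'⟩ :=
      exists_mem_Ioo_not_isLimitPointOf ⟨γ, (hDE hγD).1, hαγ, hD.1 γ hγD⟩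
    exact hγ' (hDE (htail γ' hγ'E hγ'δ hαγ'.le)).2
  · exact hdisjoint γ (hDE hγD).1 hαγ.le hγD

theorem IsClubGuessing.not_measures {κ : Ordinal} {C : Ordinal → Set Ordinal} {E : Set Ordinal}
    (hC : IsClubGuessing κ C) (hκ : ℵ₀ < κ.cof) (hE : IsClubIn E κ) : ¬ Measures E C := by
  intro hmeas
  obtain ⟨δ, hδκ, hδ, hsub⟩ := hC.2 _ (hE.inter_limitPoints hκ)
  have hCδ := hC.1 δ hδκ hδ
  have hδE : δ ∈ E :=
    hE.2.2 δ hδκ ((hCδ.isLimitPointOf hδ.ne_bot).mono (hsub.trans inter_subset_left))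
  obtain ⟨α, hα, hmeasδ⟩ := hmeas δ hδE
  exact hCδ.not_measured_of_subset_limitPoints hsub hα hmeasδ

section UniverseTransfer

universe u v

theorem isLimitPointOf_lift_image_iff {A : Set Ordinal.{u}} {α : Ordinal.{u}} :
    IsLimitPointOf (Ordinal.lift.{v} '' A) (Ordinal.lift.{v} α) ↔ IsLimitPointOf A α := by
  have hzero : Ordinal.lift.{v} α = 0 ↔ α = 0 := by
    rw [← Ordinal.lift_zero.{u, v}, Ordinal.lift_inj]
  simp [IsLimitPointOf, Ordinal.lt_lift_iff, hzero]

theorem isClubIn_lift_image_iff {A : Set Ordinal.{u}} {δ : Ordinal.{u}} :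
    IsClubIn (Ordinal.lift.{v} '' A) (Ordinal.lift.{v} δ) ↔ IsClubIn A δ := by
  simp [IsClubIn, Ordinal.lt_lift_iff, isLimitPointOf_lift_image_iff]

theorem IsClubIn.lift_preimage_lift_image {A : Set Ordinal.{u}} {δ : Ordinal.{u}}
    {δ' : Ordinal.{v}} (hA : IsClubIn A δ) (hδ : Ordinal.lift.{v} δ = Ordinal.lift.{u} δ') :
    IsClubIn (Ordinal.lift.{u} ⁻¹' (Ordinal.lift.{v} '' A)) δ' := by
  have hrange : Ordinal.lift.{v} '' A ⊆ range Ordinal.lift.{u} := by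
    rintro _ ⟨a, ha, rfl⟩
    exact Ordinal.mem_range_lift_of_le (hδ ▸ (Ordinal.lift_lt.2 (hA.1 a ha)).le)
  rw [← isClubIn_lift_image_iff.{v, u}, image_preimage_eq_of_subset hrange, ← hδ]
  exact isClubIn_lift_image_iff.2 hA

theorem exists_lift_eq_lift_of_lt_omega_one {a : Ordinal.{u}} (ha : a < ω₁) :
    ∃ b : Ordinal.{v}, Ordinal.lift.{u} b = Ordinal.lift.{v} a := by
  have : Ordinal.lift.{v} a ≤ Ordinal.lift.{u} (ω₁ : Ordinal.{v}) := by simpa using ha.le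
  exact Ordinal.mem_range_lift_of_le this

theorem lt_omega_one_iff_of_lift_eq_lift {a : Ordinal.{u}} {b : Ordinal.{v}}
    (h : Ordinal.lift.{v} a = Ordinal.lift.{u} b) : a < ω₁ ↔ b < ω₁ := by
  rw [← Ordinal.lift_lt_omega_one.{u, v}, h, Ordinal.lift_lt_omega_one]

theorem isSuccLimit_iff_of_lift_eq_lift {a : Ordinal.{u}} {b : Ordinal.{v}}
    (h : Ordinal.lift.{v} a = Ordinal.lift.{u} b) : Order.IsSuccLimit a ↔ Order.IsSuccLimit b := by
  rw [← Ordinal.isSuccLimit_lift.{v, u}, h, Ordinal.isSuccLimit_lift]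

theorem IsClubGuessing.exists_omega_one {C : Ordinal.{u} → Set Ordinal.{u}}
    (hC : IsClubGuessing ω₁ C) : ∃ C' : Ordinal.{v} → Set Ordinal.{v}, IsClubGuessing ω₁ C' := by
  let down : Ordinal.{v} → Ordinal.{u} := fun δ' =>
    Function.invFun Ordinal.lift.{v} (Ordinal.lift.{u} δ')
  have hdown : ∀ δ' < ω₁, Ordinal.lift.{v} (down δ') = Ordinal.lift.{u} δ' := fun δ' hδ' =>
    Function.invFun_eq (exists_lift_eq_lift_of_lt_omega_one hδ')
  refine ⟨fun δ' => Ordinal.lift.{u} ⁻¹' (Ordinal.lift.{v} '' C (down δ')),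
    fun δ' hδ' hlim' => ?_, fun E' hE' => ?_⟩
  · have h := hdown δ' hδ'
    exact (hC.1 _ ((lt_omega_one_iff_of_lift_eq_lift h).2 hδ')
      ((isSuccLimit_iff_of_lift_eq_lift h).2 hlim')).lift_preimage_lift_image h
  · have hω : Ordinal.lift.{u} (ω₁ : Ordinal.{v}) = Ordinal.lift.{v} (ω₁ : Ordinal.{u}) := by
      simp
    obtain ⟨δ, hδ, hlim, hsub⟩ := hC.2 _ (hE'.lift_preimage_lift_image hω)
    obtain ⟨δ', hδ'⟩ := exists_lift_eq_lift_of_lt_omega_one.{u, v} hδ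
    have hδ'ω : δ' < ω₁ := (lt_omega_one_iff_of_lift_eq_lift hδ').2 hδ
    have hdownδ' : down δ' = δ := Ordinal.lift_inj.1 ((hdown δ' hδ'ω).trans hδ')
    refine ⟨δ', hδ'ω, (isSuccLimit_iff_of_lift_eq_lift hδ').2 hlim, ?_⟩
    calc Ordinal.lift.{u} ⁻¹' (Ordinal.lift.{v} '' C (down δ'))
        ⊆ Ordinal.lift.{u} ⁻¹'
            (Ordinal.lift.{v} '' (Ordinal.lift.{v} ⁻¹' (Ordinal.lift.{u} '' E'))) := by
          rw [hdownδ']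
          exact preimage_mono (image_mono hsub)
      _ ⊆ Ordinal.lift.{u} ⁻¹' (Ordinal.lift.{u} '' E') :=
          preimage_mono (image_preimage_subset _ _)
      _ = E' := preimage_image_eq _ fun _ _ => Ordinal.lift_inj.1

end UniverseTransfer

/-- Measuring implies that there is no club-guessing sequence on ω₁. -/
theorem stmt19
    (measuring : ∀ C : Ordinal → Set Ordinal,
      (∀ δ < (Cardinal.aleph 1).ord, Order.IsSuccLimit δ → IsClubIn (C δ) δ) →
      ∃ E : Set Ordinal, IsClubIn E (Cardinal.aleph 1).ord ∧
        ∀ δ ∈ E, ∃ α < δ,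
          (∀ γ ∈ E, γ < δ → α ≤ γ → γ ∈ C δ) ∨
          (∀ γ ∈ E, α ≤ γ → γ ∉ C δ)) :
    ¬ ∃ C : Ordinal → Set Ordinal,
      (∀ δ < (Cardinal.aleph 1).ord, Order.IsSuccLimit δ → IsClubIn (C δ) δ) ∧
      ∀ E : Set Ordinal, IsClubIn E (Cardinal.aleph 1).ord →
        ∃ δ < (Cardinal.aleph 1).ord, Order.IsSuccLimit δ ∧ C δ ⊆ E := by
  rintro ⟨C, hC⟩
  rw [Cardinal.ord_aleph] at measuring hC
  obtain ⟨C', hC'⟩ := IsClubGuessing.exists_omega_one hC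
  obtain ⟨E, hE, hmeas⟩ := measuring C' hC'.1
  exact hC'.not_measures (by simp) hE hmeas

end
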